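/- arXiv:1703.00119 — 4 statements merged into one kernel-verified Lean document; each statement's English description precedes it below -/
import Mathlib

section
/- If a nonnegative real sequence (h_t) satisfies h_t ≤ (1 - 1/t)·h_{t-1} + C/t² for all t ≥ 1 with h_0 arbitrary and constant C ≥ 0, then h_t ≤ C·(1/t + (ln t)/t) for all t ≥ 1. -/
/-- If a nonnegative real sequence (h_t) satisfies
h_t ≤ (1 - 1/t)·h_{t-1} + C/t² for all t ≥ 1 with constant C ≥ 0, then
h_t ≤ C·(1/t + (ln t)/t) for all t ≥ 1. -/
theorem stmt2 (h : ℕ → ℝ) (C : ℝ) (hC : 0 ≤ C) (hnn : ∀ t, 0 ≤ h t)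
    (hrec : ∀ t : ℕ, 1 ≤ t →
      h t ≤ (1 - 1 / (t : ℝ)) * h (t - 1) + C / (t : ℝ) ^ 2) :
    ∀ t : ℕ, 1 ≤ t →
      h t ≤ C * (1 / (t : ℝ) + Real.log (t : ℝ) / (t : ℝ)) := by
  intro t ht
  induction t, ht using Nat.le_induction with
  | base =>
    have h1 := hrec 1 le_rfl
    norm_num at h1 ⊢
    linarith
  | succ n hn ih =>
    have hn' : (1:ℝ) ≤ (n:ℝ) := by exact_mod_cast hn
    have hnpos : (0:ℝ) < (n:ℝ) := by linarith
    have hn1 : (0:ℝ) < (n:ℝ) + 1 := by linarith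
    have hrec' := hrec (n+1) (by omega)
    simp only [Nat.add_sub_cancel] at hrec'
    push_cast at hrec'
    have hlog : Real.log (n:ℝ) + 1/((n:ℝ)+1) ≤ Real.log ((n:ℝ)+1) := by
      have h1 : Real.log ((n:ℝ)/((n:ℝ)+1)) ≤ (n:ℝ)/((n:ℝ)+1) - 1 :=
        Real.log_le_sub_one_of_pos (by positivity)
      have h2 : Real.log ((n:ℝ)/((n:ℝ)+1)) = Real.log (n:ℝ) - Real.log ((n:ℝ)+1) :=
        Real.log_div (ne_of_gt hnpos) (ne_of_gt hn1)
      have h3 : (n:ℝ)/((n:ℝ)+1) - 1 = -(1/((n:ℝ)+1)) := by field_simp; ring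
      rw [h2, h3] at h1
      linarith
    have hfac : (0:ℝ) ≤ 1 - 1/((n:ℝ)+1) := by
      have : 1/((n:ℝ)+1) ≤ 1 := by rw [div_le_one hn1]; linarith
      linarith
    have key : (1 - 1/((n:ℝ)+1)) * (1/(n:ℝ) + Real.log (n:ℝ) / (n:ℝ)) + 1/((n:ℝ)+1)^2
        ≤ 1/((n:ℝ)+1) + Real.log ((n:ℝ)+1)/((n:ℝ)+1) := by
      have e1 : (1 - 1/((n:ℝ)+1)) * (1/(n:ℝ) + Real.log (n:ℝ) / (n:ℝ)) + 1/((n:ℝ)+1)^2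
          = (1 + Real.log (n:ℝ) + 1/((n:ℝ)+1))/((n:ℝ)+1) := by
        field_simp
        ring
      have e2 : 1/((n:ℝ)+1) + Real.log ((n:ℝ)+1)/((n:ℝ)+1)
          = (1 + Real.log ((n:ℝ)+1))/((n:ℝ)+1) := by ring
      rw [e1, e2]
      exact (div_le_div_iff_of_pos_right hn1).mpr (by linarith)
    calc h (n+1) ≤ (1 - 1/((n:ℝ)+1)) * h n + C/((n:ℝ)+1)^2 := hrec'
      _ ≤ (1 - 1/((n:ℝ)+1)) * (C * (1/(n:ℝ) + Real.log (n:ℝ) / (n:ℝ))) + C/((n:ℝ)+1)^2 := by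
          gcongr
      _ = C * ((1 - 1/((n:ℝ)+1)) * (1/(n:ℝ) + Real.log (n:ℝ) / (n:ℝ)) + 1/((n:ℝ)+1)^2) := by
          ring
      _ ≤ C * (1/((n:ℝ)+1) + Real.log ((n:ℝ)+1)/((n:ℝ)+1)) := by
          exact mul_le_mul_of_nonneg_left key hC
      _ = C * (1/((n+1:ℕ):ℝ) + Real.log ((n+1:ℕ):ℝ)/((n+1:ℕ):ℝ)) := by push_cast; ring
end

section
/- If (w̄, ᾱ) is a k-sparse saddle point of L, then w̄ = H_k(−(1/(λN))·Σ_{i=1}^N ᾱ_i x_i), where H_k is the hard-thresholding operator keeping the k largest-magnitude coordinates. -/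
lemma sum_update_sq {d : ℕ} (v w : Fin d → ℝ) (j : Fin d) (a : ℝ) :
    ∑ i, (Function.update w j a i - v i) ^ 2 =
      ∑ i, (w i - v i) ^ 2 - (w j - v j) ^ 2 + (a - v j) ^ 2 := by
  have hfun : (fun i => (Function.update w j a i - v i) ^ 2)
      = Function.update (fun i => (w i - v i) ^ 2) j ((a - v j) ^ 2) := by
    funext i
    by_cases h : i = j
    · subst h; simp
    · simp [Function.update_of_ne h]
  rw [hfun, Finset.sum_update_of_mem (Finset.mem_univ j)]
  rw [Finset.sum_sdiff_eq_sub (Finset.subset_univ {j}), Finset.sum_singleton]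
  ring

/-- `w` has at most `k` nonzero entries. -/
def Sparse {d : ℕ} (k : ℕ) (w : Fin d → ℝ) : Prop :=
  Set.ncard {i | w i ≠ 0} ≤ k

/-- Euclidean dot product. -/
def dotP {d : ℕ} (w x : Fin d → ℝ) : ℝ := ∑ i, w i * x i

/-- Squared Euclidean norm. -/
def normSq {n : ℕ} (w : Fin n → ℝ) : ℝ := ∑ i, (w i) ^ 2

/-- `w` is a hard thresholding of `v` keeping the `k` largest-magnitude
entries (ties broken arbitrarily) and zeroing the rest. -/
def IsHardThresh {d : ℕ} (k : ℕ) (v w : Fin d → ℝ) : Prop :=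
  ∃ G : Finset (Fin d), G.card = min k d ∧ (∀ j ∈ G, w j = v j) ∧
    (∀ j ∉ G, w j = 0) ∧ ∀ j ∈ G, ∀ m ∉ G, |v m| ≤ |v j|

/-- If (w̄, ᾱ) is a k-sparse saddle point of L, then
w̄ = H_k(−(1/(λN))·Σ_i ᾱ_i x_i). -/
theorem stmt7 (N d k : ℕ) (hN : 0 < N) (x : Fin N → Fin d → ℝ)
    (lam : ℝ) (hlam : 0 < lam)
    (lstar : Fin N → ℝ → ℝ) (F : Set ℝ)
    (L : (Fin d → ℝ) → (Fin N → ℝ) → ℝ)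
    (hL : ∀ w α, L w α =
      (1 / (N : ℝ)) * ∑ i, (α i * dotP w (x i) - lstar i (α i)) +
        (lam / 2) * normSq w)
    (wb : Fin d → ℝ) (ab : Fin N → ℝ)
    (hwb : Sparse k wb) (hab : ∀ i, ab i ∈ F)
    (hsaddle1 : ∀ α : Fin N → ℝ, (∀ i, α i ∈ F) → L wb α ≤ L wb ab)
    (hsaddle2 : ∀ w, Sparse k w → L wb ab ≤ L w ab) :
    IsHardThresh k (fun j => -(1 / (lam * (N : ℝ))) * ∑ i, ab i * x i j) wb := by
  set v : Fin d → ℝ := fun j => -(1 / (lam * (N : ℝ))) * ∑ i, ab i * x i j with hv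
  have hNne : (N : ℝ) ≠ 0 := Nat.cast_ne_zero.mpr hN.ne'
  have hlamne : lam ≠ 0 := hlam.ne'
  -- S j = -(lam*N) * v j
  have hS : ∀ j, ∑ i, ab i * x i j = -(lam * (N : ℝ)) * v j := by
    intro j
    simp only [hv]
    field_simp
  -- quadratic form identity for L
  have key : ∀ u : Fin d → ℝ, L u ab =
      (lam / 2) * ∑ j, (u j - v j) ^ 2 +
        ((1 / (N : ℝ)) * ∑ i, -(lstar i (ab i)) - (lam / 2) * ∑ j, (v j) ^ 2) := by
    intro u
    rw [hL]
    unfold dotP normSq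
    have h1 : ∑ i, (ab i * ∑ j, u j * x i j - lstar i (ab i))
        = (∑ i, ab i * ∑ j, u j * x i j) + ∑ i, -(lstar i (ab i)) := by
      rw [← Finset.sum_add_distrib]
      apply Finset.sum_congr rfl
      intros; ring
    have h2 : ∑ i, ab i * ∑ j, u j * x i j = ∑ j, u j * (-(lam * (N : ℝ)) * v j) := by
      have : ∑ i, ab i * ∑ j, u j * x i j = ∑ i, ∑ j, u j * (ab i * x i j) := by
        apply Finset.sum_congr rfl
        intro i _
        rw [Finset.mul_sum]
        apply Finset.sum_congr rfl
        intros; ring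
      rw [this, Finset.sum_comm]
      apply Finset.sum_congr rfl
      intro j _
      rw [← Finset.mul_sum, hS j]
    rw [h1, h2]
    have h3 : ∑ j, (u j - v j) ^ 2
        = ∑ j, (u j) ^ 2 - 2 * ∑ j, u j * v j + ∑ j, (v j) ^ 2 := by
      rw [Finset.mul_sum, ← Finset.sum_sub_distrib, ← Finset.sum_add_distrib]
      apply Finset.sum_congr rfl
      intros; ring
    have h4 : ∑ j, u j * (-(lam * (N : ℝ)) * v j) = -(lam * (N : ℝ)) * ∑ j, u j * v j := by
      rw [Finset.mul_sum]
      apply Finset.sum_congr rfl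
      intros; ring
    rw [h3, h4]
    field_simp
    ring
  -- minimization of the quadratic over sparse vectors
  have hmin : ∀ w, Sparse k w →
      ∑ j, (wb j - v j) ^ 2 ≤ ∑ j, (w j - v j) ^ 2 := by
    intro w hw
    have h2 := hsaddle2 w hw
    rw [key wb, key w] at h2
    have hl2 : 0 < lam / 2 := by linarith
    nlinarith [h2]
  -- on its support, wb agrees with v
  have lemA : ∀ j, wb j ≠ 0 → wb j = v j := by
    intro j hj
    have hsp : Sparse k (Function.update wb j (v j)) := by
      refine le_trans (Set.ncard_le_ncard ?_ (Set.toFinite _)) hwb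
      intro i hi
      by_cases h : i = j
      · subst h; exact hj
      · simpa [Function.update_of_ne h] using hi
    have hm := hmin _ hsp
    rw [sum_update_sq] at hm
    have hsq : (wb j - v j) ^ 2 ≤ 0 := by
      have := sub_self (v j)
      nlinarith [hm]
    have : wb j - v j = 0 := by nlinarith [sq_nonneg (wb j - v j)]
    linarith
  -- the support as a finset
  set T : Finset (Fin d) := Finset.univ.filter (fun i => wb i ≠ 0) with hT
  have hTset : {i | wb i ≠ 0} = ↑T := by
    ext i; simp [hT]
  have hTcard : T.card ≤ k := by
    have := hwb
    unfold Sparse at this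
    rwa [hTset, Set.ncard_coe_finset] at this
  have hTd : T.card ≤ d := by
    have := Finset.card_le_univ T
    simpa using this
  by_cases hcase : T.card < min k d
  · -- v vanishes off the support
    have hv0 : ∀ m, m ∉ T → v m = 0 := by
      intro m hm
      have hwm : wb m = 0 := by
        by_contra h
        exact hm (by simp [hT, h])
      have hsp : Sparse k (Function.update wb m (v m)) := by
        unfold Sparse
        have hsub : {i | Function.update wb m (v m) i ≠ 0} ⊆ ↑(insert m T) := by
          intro i hi
          by_cases h : i = m
          · subst h; simp
          · simp only [Set.mem_setOf_eq, Function.update_of_ne h] at hi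
            simp [hT, hi]
        calc Set.ncard {i | Function.update wb m (v m) i ≠ 0}
            ≤ Set.ncard (↑(insert m T) : Set (Fin d)) :=
              Set.ncard_le_ncard hsub (Set.toFinite _)
          _ = (insert m T).card := Set.ncard_coe_finset _
          _ ≤ T.card + 1 := Finset.card_insert_le _ _
          _ ≤ min k d := hcase
          _ ≤ k := min_le_left _ _
      have hm2 := hmin _ hsp
      rw [sum_update_sq, hwm] at hm2
      have : (v m) ^ 2 ≤ 0 := by nlinarith [hm2]
      nlinarith [sq_nonneg (v m)]
    -- extend T to a set of size min k d
    obtain ⟨G, hTG, _, hGcard⟩ :=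
      Finset.exists_subsuperset_card_eq (Finset.subset_univ T)
        (le_of_lt hcase) (by simpa using min_le_right k d)
    refine ⟨G, hGcard, ?_, ?_, ?_⟩
    · intro j _
      by_cases h : wb j = 0
      · have hjT : j ∉ T := by simp [hT, h]
        rw [h, hv0 j hjT]
      · exact lemA j h
    · intro j hj
      by_contra h
      exact hj (hTG (by simp [hT, h]))
    · intro j _ m hm
      have : m ∉ T := fun hmT => hm (hTG hmT)
      rw [hv0 m this]
      simp
  · -- support has exactly min k d elements
    have hTeq : T.card = min k d :=
      le_antisymm (le_min hTcard hTd) (not_lt.mp hcase)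
    refine ⟨T, hTeq, ?_, ?_, ?_⟩
    · intro j hj
      exact lemA j (by simpa [hT] using hj)
    · intro j hj
      by_contra h
      exact hj (by simp [hT, h])
    · intro j hj m hm
      have hjm : m ≠ j := fun h => hm (h ▸ hj)
      have hwj : wb j ≠ 0 := by simpa [hT] using hj
      have hwjv : wb j = v j := lemA j hwj
      have hwm : wb m = 0 := by
        by_contra h
        exact hm (by simp [hT, h])
      -- exchange: drop j, add m
      have hsp : Sparse k (Function.update (Function.update wb j 0) m (v m)) := by
        unfold Sparse
        have hsub : {i | Function.update (Function.update wb j 0) m (v m) i ≠ 0}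
            ⊆ ↑(insert m (T.erase j)) := by
          intro i hi
          by_cases h : i = m
          · subst h; simp
          · simp only [Set.mem_setOf_eq, Function.update_of_ne h] at hi
            by_cases h' : i = j
            · subst h'; simp at hi
            · simp only [Function.update_of_ne h'] at hi
              simp [Finset.mem_insert, Finset.mem_erase, h', hT, hi]
        have hmerase : m ∉ T.erase j := fun h => hm (Finset.mem_of_mem_erase h)
        calc Set.ncard {i | Function.update (Function.update wb j 0) m (v m) i ≠ 0}
            ≤ Set.ncard (↑(insert m (T.erase j)) : Set (Fin d)) :=
              Set.ncard_le_ncard hsub (Set.toFinite _)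
          _ = (insert m (T.erase j)).card := Set.ncard_coe_finset _
          _ = (T.erase j).card + 1 := Finset.card_insert_of_notMem hmerase
          _ = T.card - 1 + 1 := by rw [Finset.card_erase_of_mem hj]
          _ = T.card := Nat.succ_pred_eq_of_pos (Finset.card_pos.mpr ⟨j, hj⟩)
          _ ≤ k := hTcard
      have hm2 := hmin _ hsp
      rw [sum_update_sq, sum_update_sq] at hm2
      rw [Function.update_of_ne hjm, hwjv, hwm] at hm2
      have hsqle : (v m) ^ 2 ≤ (v j) ^ 2 := by nlinarith [hm2]
      rw [← Real.sqrt_sq_eq_abs, ← Real.sqrt_sq_eq_abs]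
      exact Real.sqrt_le_sqrt hsqle
end

section
/- For any α, α'' ∈ F^N, any g in the super-differential of D at α'' given by g_i = (1/N)(w(α'')ᵀx_i − s_i) with s_i ∈ ∂l_i*(α''_i), it holds that D(α) ≤ D(α'') + ⟨g, α − α''⟩, i.e., these vectors are valid super-gradients of the concave function D. -/
lemma sum_le_sum_of_card_eq {ι : Type*} [DecidableEq ι] (A B : Finset ι) (f : ι → ℝ)
    (h : A.card = B.card) (hf : ∀ a ∈ A, ∀ b ∈ B, f a ≤ f b) :
    ∑ a ∈ A, f a ≤ ∑ b ∈ B, f b := by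
  have e := Finset.equivOfCardEq h
  calc ∑ a ∈ A, f a = ∑ a ∈ A.attach, f a := (Finset.sum_attach A f).symm
    _ ≤ ∑ a ∈ A.attach, f (e a) :=
        Finset.sum_le_sum (fun a _ => hf a a.2 (e a) (e a).2)
    _ = ∑ b ∈ B.attach, f b := by
        rw [← Finset.univ_eq_attach, ← Finset.univ_eq_attach]
        exact Fintype.sum_equiv e _ _ (fun a => rfl)
    _ = ∑ b ∈ B, f b := Finset.sum_attach B f

lemma thresh_max {d k : ℕ} (v w : Fin d → ℝ) (h : IsHardThresh k v w)
    (G'' : Finset (Fin d)) (hc : G''.card = min k d) :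
    ∑ j ∈ G'', (v j) ^ 2 ≤ normSq w := by
  obtain ⟨G, hGc, hGeq, hGz, hGmax⟩ := h
  have hns : normSq w = ∑ j ∈ G, (v j) ^ 2 := by
    unfold normSq
    rw [← Finset.sum_subset (Finset.subset_univ G)
      (fun j _ hj => by rw [hGz j hj]; ring)]
    exact Finset.sum_congr rfl (fun j hj => by rw [hGeq j hj])
  rw [hns]
  have h1 : ∑ j ∈ G'', (v j) ^ 2
      = ∑ j ∈ G'' ∩ G, (v j) ^ 2 + ∑ j ∈ G'' \ G, (v j) ^ 2 :=
    (Finset.sum_inter_add_sum_sdiff G'' G _).symm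
  have h2 : ∑ j ∈ G, (v j) ^ 2
      = ∑ j ∈ G ∩ G'', (v j) ^ 2 + ∑ j ∈ G \ G'', (v j) ^ 2 :=
    (Finset.sum_inter_add_sum_sdiff G G'' _).symm
  rw [h1, h2, Finset.inter_comm]
  have hcard : (G'' \ G).card = (G \ G'').card := by
    have e1 := Finset.card_inter_add_card_sdiff G'' G
    have e2 := Finset.card_inter_add_card_sdiff G G''
    rw [Finset.inter_comm] at e2
    omega
  have hle : ∑ j ∈ G'' \ G, (v j) ^ 2 ≤ ∑ j ∈ G \ G'', (v j) ^ 2 := by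
    apply sum_le_sum_of_card_eq _ _ _ hcard
    intro a ha b hb
    have hab : |v a| ≤ |v b| := hGmax b (Finset.mem_sdiff.mp hb).1 a (Finset.mem_sdiff.mp ha).2
    calc (v a) ^ 2 = |v a| ^ 2 := (sq_abs _).symm
      _ ≤ |v b| ^ 2 := pow_le_pow_left₀ (abs_nonneg _) hab 2
      _ = (v b) ^ 2 := sq_abs _
  linarith

/-- Any vector g with g_i = (1/N)(w(α'')ᵀx_i − s_i), where s_i ∈ ∂l_i*(α''_i),
is a valid super-gradient of the concave dual objective D at α'':
D(α) ≤ D(α'') + ⟨g, α − α''⟩ for all α, α'' ∈ F^N. -/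
theorem stmt13 (N d k : ℕ) (hN : 0 < N) (x : Fin N → Fin d → ℝ)
    (lam : ℝ) (hlam : 0 < lam)
    (lstar : Fin N → ℝ → ℝ) (F : Set ℝ)
    (wα : (Fin N → ℝ) → (Fin d → ℝ))
    (hw : ∀ α : Fin N → ℝ,
      IsHardThresh k (fun j => -(1 / ((N : ℝ) * lam)) * ∑ i, α i * x i j) (wα α))
    (D : (Fin N → ℝ) → ℝ)
    (hDdef : ∀ α : Fin N → ℝ, D α =
      (1 / (N : ℝ)) * ∑ i, -(lstar i (α i)) - (lam / 2) * normSq (wα α))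
    (α α'' : Fin N → ℝ) (hα : ∀ i, α i ∈ F) (hα'' : ∀ i, α'' i ∈ F)
    (s : Fin N → ℝ)
    (hs : ∀ i, ∀ b ∈ F, lstar i (α'' i) + s i * (b - α'' i) ≤ lstar i b)
    (g : Fin N → ℝ)
    (hg : ∀ i, g i = (1 / (N : ℝ)) * (dotP (wα α'') (x i) - s i)) :
    D α ≤ D α'' + ∑ i, g i * (α i - α'' i) := by
  have hN' : (0:ℝ) < (N:ℝ) := by exact_mod_cast hN
  have hNne : (N:ℝ) ≠ 0 := ne_of_gt hN'
  have hlamne : lam ≠ 0 := ne_of_gt hlam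
  set vA : Fin d → ℝ := fun j => -(1 / ((N : ℝ) * lam)) * ∑ i, α i * x i j with hvA
  set vB : Fin d → ℝ := fun j => -(1 / ((N : ℝ) * lam)) * ∑ i, α'' i * x i j with hvB
  obtain ⟨G2, hG2c, hG2eq, hG2z, _⟩ := hw α''
  have hA : normSq (wα α'') = ∑ j ∈ G2, (vB j) ^ 2 := by
    unfold normSq
    rw [← Finset.sum_subset (Finset.subset_univ G2)
      (fun j _ hj => by rw [hG2z j hj]; ring)]
    exact Finset.sum_congr rfl (fun j hj => by rw [hG2eq j hj])
  have hB : ∑ j ∈ G2, (vA j) ^ 2 ≤ normSq (wα α) :=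
    thresh_max vA (wα α) (hw α) G2 hG2c
  have hC : ∑ j ∈ G2, ((vB j) ^ 2 + 2 * vB j * (vA j - vB j)) ≤ normSq (wα α) := by
    refine le_trans (Finset.sum_le_sum fun j _ => ?_) hB
    nlinarith [sq_nonneg (vA j - vB j)]
  have hδ : ∀ j, vA j - vB j = -(1 / ((N : ℝ) * lam)) * ∑ i, (α i - α'' i) * x i j := by
    intro j
    simp only [hvA, hvB]
    rw [← mul_sub, ← Finset.sum_sub_distrib]
    exact congrArg _ (Finset.sum_congr rfl fun i _ => (sub_mul _ _ _).symm)
  have hcross : ∑ j ∈ G2, vB j * (vA j - vB j)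
      = -(1 / ((N : ℝ) * lam)) * ∑ i, (α i - α'' i) * dotP (wα α'') (x i) := by
    calc ∑ j ∈ G2, vB j * (vA j - vB j)
        = ∑ j ∈ G2, wα α'' j * (vA j - vB j) :=
          Finset.sum_congr rfl (fun j hj => by rw [hG2eq j hj])
      _ = ∑ j, wα α'' j * (vA j - vB j) :=
          Finset.sum_subset (Finset.subset_univ G2)
            (fun j _ hj => by rw [hG2z j hj]; ring)
      _ = ∑ j, wα α'' j * (-(1 / ((N : ℝ) * lam)) * ∑ i, (α i - α'' i) * x i j) :=
          Finset.sum_congr rfl (fun j _ => by rw [hδ j])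
      _ = -(1 / ((N : ℝ) * lam)) * ∑ i, (α i - α'' i) * dotP (wα α'') (x i) := by
          simp only [dotP, Finset.mul_sum]
          rw [Finset.sum_comm]
          exact Finset.sum_congr rfl fun i _ => Finset.sum_congr rfl fun j _ => by ring
  have hsplit : ∑ j ∈ G2, ((vB j) ^ 2 + 2 * vB j * (vA j - vB j))
      = normSq (wα α'') + 2 * ∑ j ∈ G2, vB j * (vA j - vB j) := by
    rw [Finset.sum_add_distrib, hA, Finset.mul_sum]
    congr 1
    exact Finset.sum_congr rfl fun j _ => by ring
  have hquad : -(lam / 2 * normSq (wα α)) ≤ -(lam / 2 * normSq (wα α''))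
      + (1 / (N : ℝ)) * ∑ i, (α i - α'' i) * dotP (wα α'') (x i) := by
    rw [hsplit, hcross] at hC
    have hfact : lam / 2 * (2 * (-(1 / ((N : ℝ) * lam)) *
        ∑ i, (α i - α'' i) * dotP (wα α'') (x i)))
        = -((1 / (N : ℝ)) * ∑ i, (α i - α'' i) * dotP (wα α'') (x i)) := by
      field_simp
    nlinarith [hC, hlam, hfact]
  have hloss : (1 / (N : ℝ)) * ∑ i, -(lstar i (α i))
      ≤ (1 / (N : ℝ)) * ∑ i, -(lstar i (α'' i))
        - (1 / (N : ℝ)) * ∑ i, s i * (α i - α'' i) := by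
    have hpt : ∀ i, -(lstar i (α i)) ≤ -(lstar i (α'' i)) - s i * (α i - α'' i) := by
      intro i
      have := hs i (α i) (hα i)
      linarith
    have hsum : ∑ i, -(lstar i (α i))
        ≤ ∑ i, (-(lstar i (α'' i)) - s i * (α i - α'' i)) :=
      Finset.sum_le_sum fun i _ => hpt i
    rw [Finset.sum_sub_distrib] at hsum
    have := mul_le_mul_of_nonneg_left hsum (by positivity : (0:ℝ) ≤ 1 / (N:ℝ))
    rw [mul_sub] at this
    exact this
  have hgsum : ∑ i, g i * (α i - α'' i)
      = (1 / (N : ℝ)) * ∑ i, (α i - α'' i) * dotP (wα α'') (x i)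
        - (1 / (N : ℝ)) * ∑ i, s i * (α i - α'' i) := by
    rw [Finset.mul_sum, Finset.mul_sum, ← Finset.sum_sub_distrib]
    exact Finset.sum_congr rfl fun i _ => by rw [hg i]; ring
  rw [hDdef α, hDdef α'', hgsum]
  linarith [hquad, hloss]
end

section
/- Gap bound via super-gradient: for a pair (w, α) with w = H_k(−(1/(Nλ))·Σ_i α_i x_i), differentiable losses l_i and conjugates l_i*, letting g_i = (1/N)(wᵀx_i − (l_i*)'(α_i)) and β_i = l_i'(wᵀx_i), one has P(w) − D(α) ≤ ⟨g, β − α⟩. -/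
/-- Tangent line inequality for a convex function on univ. -/
lemma tangent_le {f : ℝ → ℝ} {f' : ℝ} (hf : ConvexOn ℝ Set.univ f) {a : ℝ}
    (hd : HasDerivAt f f' a) (b : ℝ) : f a + f' * (b - a) ≤ f b := by
  rcases lt_trichotomy a b with h | h | h
  · have := hf.le_slope_of_hasDerivAt (Set.mem_univ a) (Set.mem_univ b) h hd
    rw [slope_def_field] at this
    rw [le_div_iff₀ (by linarith : (0:ℝ) < b - a)] at this
    linarith
  · simp [h]
  · have := hf.slope_le_of_hasDerivAt (Set.mem_univ b) (Set.mem_univ a) h hd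
    rw [slope_def_field] at this
    rw [div_le_iff₀ (by linarith : (0:ℝ) < a - b)] at this
    linarith

/-- Gap bound via super-gradient: for w = H_k(−(1/(Nλ))·Σ_i α_i x_i),
differentiable convex losses l_i with conjugates l_i*, letting
g_i = (1/N)(wᵀx_i − (l_i*)'(α_i)) and β_i = l_i'(wᵀx_i), one has
P(w) − D(α) ≤ ⟨g, β − α⟩. -/
theorem stmt15 (N d k : ℕ) (hN : 0 < N) (x : Fin N → Fin d → ℝ)
    (lam : ℝ) (hlam : 0 < lam)
    (l lstar dl dlstar : Fin N → ℝ → ℝ)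
    (hconv : ∀ i, ConvexOn ℝ Set.univ (l i))
    (hdl : ∀ i u, HasDerivAt (l i) (dl i u) u)
    (hdlstar : ∀ i a, HasDerivAt (lstar i) (dlstar i a) a)
    (hconj : ∀ i a, IsLUB {r : ℝ | ∃ u : ℝ, r = a * u - l i u} (lstar i a))
    (α : Fin N → ℝ) (w : Fin d → ℝ)
    (hw : IsHardThresh k (fun j => -(1 / ((N : ℝ) * lam)) * ∑ i, α i * x i j) w)
    (P D : ℝ)
    (hP : P = (1 / (N : ℝ)) * ∑ i, l i (dotP w (x i)) + (lam / 2) * normSq w)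
    (hD : D = (1 / (N : ℝ)) * ∑ i, -(lstar i (α i)) - (lam / 2) * normSq w)
    (g β : Fin N → ℝ)
    (hg : ∀ i, g i = (1 / (N : ℝ)) * (dotP w (x i) - dlstar i (α i)))
    (hβ : ∀ i, β i = dl i (dotP w (x i))) :
    P - D ≤ ∑ i, g i * (β i - α i) := by
  obtain ⟨G, hGcard, hG1, hG2, -⟩ := hw
  have hN' : ((N : ℝ)) ≠ 0 := by positivity
  have hNlam : ((N : ℝ) * lam) ≠ 0 := by positivity
  -- lstar is convex
  have hlsconv : ∀ i, ConvexOn ℝ Set.univ (lstar i) := by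
    intro i
    refine ⟨convex_univ, ?_⟩
    intro a _ b _ p q hp hq hpq
    refine (hconj i (p • a + q • b)).2 ?_
    rintro r ⟨v, rfl⟩
    have h1 := (hconj i a).1 ⟨v, rfl⟩
    have h2 := (hconj i b).1 ⟨v, rfl⟩
    simp only [Set.mem_setOf_eq, smul_eq_mul] at *
    have e1 := mul_le_mul_of_nonneg_left h1 hp
    have e2 := mul_le_mul_of_nonneg_left h2 hq
    have hq1 : q = 1 - p := by linarith
    subst hq1
    nlinarith [e1, e2]
  -- Fenchel equality at β i
  have hfen : ∀ i, lstar i (β i) = β i * dotP w (x i) - l i (dotP w (x i)) := by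
    intro i
    set u₀ := dotP w (x i)
    refine (hconj i (β i)).unique ⟨?_, fun c hc => hc ⟨u₀, rfl⟩⟩
    rintro r ⟨v, rfl⟩
    have := tangent_le (hconv i) (hdl i u₀) v
    rw [hβ i]
    nlinarith [this]
  -- gradient inequality for lstar
  have hgrad : ∀ i, lstar i (α i) + dlstar i (α i) * (β i - α i) ≤ lstar i (β i) :=
    fun i => tangent_le (hlsconv i) (hdlstar i (α i)) (β i)
  -- key identity from hard thresholding
  have hA : ∑ i, α i * dotP w (x i) = -((N : ℝ) * lam) * normSq w := by
    have hswap : ∑ i, α i * dotP w (x i) = ∑ j, w j * ∑ i, α i * x i j := by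
      simp only [dotP, Finset.mul_sum]
      rw [Finset.sum_comm]
      exact Finset.sum_congr rfl fun j _ => Finset.sum_congr rfl fun i _ => by ring
    rw [hswap, normSq, Finset.mul_sum]
    refine Finset.sum_congr rfl fun j _ => ?_
    by_cases hj : j ∈ G
    · have hwj := hG1 j hj
      simp only at hwj
      have hS : ∑ i, α i * x i j = -((N : ℝ) * lam) * w j := by
        rw [hwj]; field_simp
      rw [hS]; ring
    · rw [hG2 j hj]; ring
  -- per-coordinate inequality
  have hper : ∀ i ∈ Finset.univ, l i (dotP w (x i)) + lstar i (α i) - α i * dotP w (x i)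
      ≤ (dotP w (x i) - dlstar i (α i)) * (β i - α i) := by
    intro i _
    have h1 := hfen i
    have h2 := hgrad i
    nlinarith [h1, h2]
  have hsum := Finset.sum_le_sum hper
  rw [Finset.sum_sub_distrib, Finset.sum_add_distrib] at hsum
  have hrhs : ∑ i, g i * (β i - α i)
      = (1 / (N : ℝ)) * ∑ i, (dotP w (x i) - dlstar i (α i)) * (β i - α i) := by
    rw [Finset.mul_sum]
    exact Finset.sum_congr rfl fun i _ => by rw [hg i]; ring
  rw [hP, hD, hrhs]
  have hns : lam * normSq w = -((1 / (N : ℝ)) * ∑ i, α i * dotP w (x i)) := by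
    rw [hA]; field_simp
  have hNpos : (0:ℝ) < 1 / (N : ℝ) := by positivity
  have key := mul_le_mul_of_nonneg_left hsum hNpos.le
  rw [mul_sub, mul_add] at key
  simp only [Finset.sum_neg_distrib]
  linarith [key, hns]
end
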